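/- arXiv:1210.6921 — 4 statements merged into one kernel-verified Lean document; each statement's English description precedes it below -/
import Mathlib

section
/- Let V be a finite-dimensional real vector space and let S₁, S₂ be finite subsets of V. Let C₁ and C₂ be the cones consisting of all finite nonnegative real linear combinations of elements of S₁ and of S₂ respectively. If C₁ ∩ C₂ = {0} and neither C₁ nor C₂ contains a line (that is, for i = 1,2, x ∈ Cᵢ and −x ∈ Cᵢ imply x = 0), then there exists a linear functional f : V → ℝ such that f(x) > 0 for every nonzero x ∈ C₁ and f(x) < 0 for every nonzero x ∈ C₂. -/
/-!
Replacing `S₂` by `-S₂`, it suffices to find a functional that is positive on the nonzero points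
of the single cone `C₁ + (-C₂)`; this cone is salient because `C₁` and `C₂` are salient and meet
only at `0`. In a salient cone `C`, the set `C \ {0}` is convex, so `0` lies outside the convex hull
of the nonzero generators. That hull is compact, and Hahn–Banach gives a functional positive on
the generators, hence on every nonzero point of the cone.
-/

open scoped BigOperators

variable {V : Type*} [AddCommGroup V] [Module ℝ V]

/-- The set of finite nonnegative real linear combinations of elements of `S`. -/
def coneR (S : Set V) : Set V :=
  {x | ∃ (n : ℕ) (c : Fin n → ℝ) (v : Fin n → V),
    (∀ i, 0 ≤ c i) ∧ (∀ i, v i ∈ S) ∧ x = ∑ i, c i • v i}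

open scoped Pointwise

lemma coneR_eq_hull (S : Set V) : coneR S = (PointedCone.hull ℝ S : Set V) := by
  ext x
  rw [SetLike.mem_coe, Submodule.mem_span_set']
  constructor
  · rintro ⟨n, c, v, hc, hv, rfl⟩
    exact ⟨n, fun i => ⟨c i, hc i⟩, fun i => ⟨v i, hv i⟩, rfl⟩
  · rintro ⟨n, c, v, rfl⟩
    exact ⟨n, fun i => c i, fun i => v i, fun i => (c i).2, fun i => (v i).2, rfl⟩

namespace ConvexCone.Salient

variable {E : Type*} [AddCommGroup E] [Module ℝ E] {C : ConvexCone ℝ E}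

lemma eq_zero_of_add_eq_zero (hC : C.Salient) {x y : E} (hx : x ∈ C) (hy : y ∈ C)
    (hxy : x + y = 0) : x = 0 := by
  by_contra hx0
  exact hC x hx hx0 (neg_eq_of_add_eq_zero_right hxy ▸ hy)

lemma convex_diff_zero (hC : C.Salient) : Convex ℝ ((C : Set E) \ {0}) := by
  refine convex_iff_forall_pos.2 fun x ⟨hx, hx0⟩ y ⟨hy, hy0⟩ a b ha hb _ => ⟨?_, ?_⟩
  · exact C.add_mem (C.smul_mem ha hx) (C.smul_mem hb hy)
  · intro hxy
    exact smul_ne_zero ha.ne' hx0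
      (hC.eq_zero_of_add_eq_zero (C.smul_mem ha hx) (C.smul_mem hb hy) hxy)

lemma zero_notMem_convexHull (hC : C.Salient) {s : Set E} (hs : s ⊆ C) :
    (0 : E) ∉ convexHull ℝ (s \ {0}) := fun h =>
  (convexHull_min (Set.sdiff_subset_sdiff_left hs) hC.convex_diff_zero h).2 rfl

end ConvexCone.Salient

theorem exists_strongDual_pos_of_zero_notMem_convexHull {E : Type*} [TopologicalSpace E]
    [AddCommGroup E] [IsTopologicalAddGroup E] [Module ℝ E] [ContinuousSMul ℝ E]
    [LocallyConvexSpace ℝ E] [T2Space E] {t : Set E} (ht : t.Finite)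
    (h0 : (0 : E) ∉ convexHull ℝ t) : ∃ f : StrongDual ℝ E, ∀ v ∈ t, 0 < f v := by
  obtain ⟨f, u, hf0, hfu⟩ := geometric_hahn_banach_point_closed (convex_convexHull ℝ t)
    (ht.isCompact_convexHull ℝ).isClosed h0
  exact ⟨f, fun v hv => (map_zero f ▸ hf0).trans (hfu v (subset_convexHull ℝ t hv))⟩

namespace PointedCone

variable {E : Type*} [AddCommGroup E] [Module ℝ E]

lemma salient_sup_neg {C₁ C₂ : PointedCone ℝ E} (h₁ : (C₁ : ConvexCone ℝ E).Salient)
    (h₂ : (C₂ : ConvexCone ℝ E).Salient) (hmeet : C₁ ⊓ C₂ = ⊥) :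
    ((C₁ ⊔ -C₂ : PointedCone ℝ E) : ConvexCone ℝ E).Salient := by
  rintro _ hx hx0 hnx
  obtain ⟨a₁, ha₁, n₁, hn₁, rfl⟩ := Submodule.mem_sup.1 hx
  obtain ⟨a₂, ha₂, n₂, hn₂, hsum⟩ := Submodule.mem_sup.1 hnx
  rw [Submodule.mem_neg] at hn₁ hn₂
  have hsum' : a₁ + a₂ = -n₁ + -n₂ := by linear_combination (norm := module) hsum
  have ha : a₁ + a₂ = 0 := by
    rw [← Submodule.mem_bot {c : ℝ // 0 ≤ c}, ← hmeet]
    exact ⟨C₁.add_mem ha₁ ha₂, hsum' ▸ C₂.add_mem hn₁ hn₂⟩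
  have hn : -n₁ + -n₂ = 0 := hsum' ▸ ha
  have ha₁0 := h₁.eq_zero_of_add_eq_zero ha₁ ha₂ ha
  have hn₁0 := h₂.eq_zero_of_add_eq_zero hn₁ hn₂ hn
  exact hx0 (by rw [ha₁0, neg_eq_zero.1 hn₁0, add_zero])

lemma pos_of_mem_hull {f : E →ₗ[ℝ] ℝ} {s : Set E} (hf : ∀ v ∈ s, v ≠ 0 → 0 < f v) {x : E}
    (hx : x ∈ hull ℝ s) (hx0 : x ≠ 0) : 0 < f x := by
  suffices x = 0 ∨ 0 < f x from this.resolve_left hx0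
  clear hx0
  induction hx using Submodule.span_induction with
  | mem v hv => exact or_iff_not_imp_left.2 (hf v hv)
  | zero => exact Or.inl rfl
  | add x y _ _ hx hy =>
    rcases hx with rfl | hx
    · simpa using hy
    rcases hy with rfl | hy
    · simpa using Or.inr hx
    exact Or.inr (by rw [map_add]; exact add_pos hx hy)
  | smul c x _ hx =>
    obtain ⟨c, hc⟩ := c
    rcases hc.eq_or_lt with rfl | hc
    · simp
    rcases hx with rfl | hx
    · simp
    exact Or.inr (by simpa using mul_pos hc hx)

variable [FiniteDimensional ℝ E]

lemma exists_linearMap_pos_of_salient {s : Set E} (hs : s.Finite)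
    (hsal : (hull ℝ s : ConvexCone ℝ E).Salient) :
    ∃ f : E →ₗ[ℝ] ℝ, ∀ x ∈ hull ℝ s, x ≠ 0 → 0 < f x := by
  -- `E` carries no topology, so the separation is done in coordinates.
  let e := (Module.finBasis ℝ E).equivFun
  have h0 : (0 : _) ∉ convexHull ℝ (e '' (s \ {0})) := by
    rw [← e.coe_coe, ← LinearMap.image_convexHull]
    rintro ⟨y, hy, hey⟩
    exact hsal.zero_notMem_convexHull subset_hull (e.map_eq_zero_iff.1 hey ▸ hy)
  obtain ⟨g, hg⟩ := exists_strongDual_pos_of_zero_notMem_convexHull (hs.sdiff.image e) h0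
  refine ⟨g.toLinearMap ∘ₗ e.toLinearMap, fun x => pos_of_mem_hull fun v hv hv0 => ?_⟩
  exact hg (e v) ⟨v, ⟨hv, hv0⟩, rfl⟩

theorem exists_linearMap_separating {s₁ s₂ : Set E} (h₁ : s₁.Finite) (h₂ : s₂.Finite)
    (hsal₁ : (hull ℝ s₁ : ConvexCone ℝ E).Salient) (hsal₂ : (hull ℝ s₂ : ConvexCone ℝ E).Salient)
    (hmeet : hull ℝ s₁ ⊓ hull ℝ s₂ = ⊥) :
    ∃ f : E →ₗ[ℝ] ℝ,
      (∀ x ∈ hull ℝ s₁, x ≠ 0 → 0 < f x) ∧ (∀ x ∈ hull ℝ s₂, x ≠ 0 → f x < 0) := by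
  have hhull : hull ℝ (s₁ ∪ -s₂) = hull ℝ s₁ ⊔ -hull ℝ s₂ := by
    simp only [hull, Submodule.span_union, Submodule.span_neg_eq_neg]
  obtain ⟨f, hf⟩ := exists_linearMap_pos_of_salient (h₁.union h₂.neg)
    (hhull ▸ salient_sup_neg hsal₁ hsal₂ hmeet)
  refine ⟨f, fun x hx hx0 => hf x (hhull ▸ Submodule.mem_sup_left hx) hx0, fun x hx hx0 => ?_⟩
  have hnx : -x ∈ -hull ℝ s₂ := Submodule.mem_neg.2 ((neg_neg x).symm ▸ hx)
  have := hf (-x) (hhull ▸ Submodule.mem_sup_right hnx) (neg_ne_zero.2 hx0)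
  rwa [map_neg, neg_pos] at this

end PointedCone

/-- Two finitely generated cones in a finite-dimensional real vector space meeting only at the
origin and containing no line can be strictly separated by a hyperplane through the origin. -/
theorem stmt0 [FiniteDimensional ℝ V] (S₁ S₂ : Set V) (h₁ : S₁.Finite) (h₂ : S₂.Finite)
    (hmeet : coneR S₁ ∩ coneR S₂ = {0})
    (hsal₁ : ∀ x ∈ coneR S₁, -x ∈ coneR S₁ → x = 0)
    (hsal₂ : ∀ x ∈ coneR S₂, -x ∈ coneR S₂ → x = 0) :
    ∃ f : V →ₗ[ℝ] ℝ,
      (∀ x ∈ coneR S₁, x ≠ 0 → 0 < f x) ∧ (∀ x ∈ coneR S₂, x ≠ 0 → f x < 0) := by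
  simp only [coneR_eq_hull, SetLike.mem_coe] at hmeet hsal₁ hsal₂ ⊢
  exact PointedCone.exists_linearMap_separating h₁ h₂
    (fun x hx hx0 hnx => hx0 (hsal₁ x hx hnx)) (fun x hx hx0 hnx => hx0 (hsal₂ x hx hnx))
    (SetLike.coe_injective (by simpa using hmeet))
end

section
/- Let V be a finite-dimensional real vector space, let Γ ⊆ V be a set of vectors with 0 ∉ Γ, and let c : V → ℂ be a charge for Γ. Then the total preorder ⪰_c on Γ, defined by α ⪰_c β iff arg(c(α)) ≥ arg(c(β)), is a convex preorder. -/
open scoped BigOperators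

variable {V : Type*} [AddCommGroup V] [Module ℝ V]

/-- The set of finite nonnegative integer linear combinations of elements of `S`. -/
def coneZ (S : Set V) : Set V :=
  {x | ∃ (n : ℕ) (c : Fin n → ℕ) (v : Fin n → V),
    (∀ i, v i ∈ S) ∧ x = ∑ i, (c i : ℝ) • v i}

/-- The strict part of a relation `le`. -/
def sLT (le : V → V → Prop) (a b : V) : Prop := le a b ∧ ¬ le b a

/-- The equivalence class of `α` inside `Γ` for the preorder `le`. -/
def eqCls (Γ : Set V) (le : V → V → Prop) (α : V) : Set V :=
  {β | β ∈ Γ ∧ le α β ∧ le β α}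

/-- `le` is a total preorder on `Γ`. -/
structure IsTotalPreorderOn (Γ : Set V) (le : V → V → Prop) : Prop where
  refl : ∀ a ∈ Γ, le a a
  trans : ∀ a ∈ Γ, ∀ b ∈ Γ, ∀ c ∈ Γ, le a b → le b c → le a c
  total : ∀ a ∈ Γ, ∀ b ∈ Γ, le a b ∨ le b a

/-- `le` is a convex total preorder on `Γ` (Definition 1.5 of the paper). -/
def IsConvexPreorder (Γ : Set V) (le : V → V → Prop) : Prop :=
  IsTotalPreorderOn Γ le ∧
  ∀ α ∈ Γ,
    (∀ a ∈ coneR (eqCls Γ le α), ∀ x ∈ coneZ {β | β ∈ Γ ∧ sLT le α β}, x ≠ 0 →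
        a + x ∉ coneZ {β | β ∈ Γ ∧ le β α}) ∧
    (∀ a ∈ coneR (eqCls Γ le α), ∀ x ∈ coneZ {β | β ∈ Γ ∧ sLT le β α}, x ≠ 0 →
        a + x ∉ coneZ {β | β ∈ Γ ∧ le α β})

/-- `le` is a convex total order on `Γ`: a convex total preorder that is antisymmetric on `Γ`. -/
def IsConvexOrder (Γ : Set V) (le : V → V → Prop) : Prop :=
  IsConvexPreorder Γ le ∧ ∀ a ∈ Γ, ∀ b ∈ Γ, le a b → le b a → a = b

/-!
For `α ∈ Γ` the real linear functional
`v ↦ Im (conj (c α) * c v) = ‖c α‖ ‖c v‖ sin (arg c v - arg c α)`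
vanishes on the class of `α`, is positive on the classes above it and nonpositive on the
classes up to it, since all arguments lie in `(0, π)`. So it is positive on `a + x` for `a` in
the real cone of the class and `0 ≠ x` in the integer cone of the higher classes, but
nonpositive on the integer cone of the classes up to `α`. The negated functional handles the
classes below `α`.
-/

open scoped ComplexConjugate

section Cones

variable {S : Set V} (f : V →ₗ[ℝ] ℝ)

lemma map_eq_zero_of_mem_coneR {a : V} (ha : a ∈ coneR S) (hS : ∀ v ∈ S, f v = 0) :
    f a = 0 := by
  obtain ⟨n, k, v, -, hv, rfl⟩ := ha
  simp [hS _ (hv _)]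

lemma map_nonpos_of_mem_coneZ {x : V} (hx : x ∈ coneZ S) (hS : ∀ v ∈ S, f v ≤ 0) :
    f x ≤ 0 := by
  obtain ⟨n, k, v, hv, rfl⟩ := hx
  rw [map_sum]
  refine Finset.sum_nonpos fun i _ => ?_
  rw [map_smul, smul_eq_mul]
  exact mul_nonpos_of_nonneg_of_nonpos (Nat.cast_nonneg _) (hS _ (hv i))

lemma map_pos_of_mem_coneZ {x : V} (hx : x ∈ coneZ S) (hx0 : x ≠ 0)
    (hS : ∀ v ∈ S, 0 < f v) : 0 < f x := by
  obtain ⟨n, k, v, hv, rfl⟩ := hx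
  obtain ⟨i, -, hi⟩ := Finset.exists_ne_zero_of_sum_ne_zero hx0
  have hki : (k i : ℝ) ≠ 0 := left_ne_zero_of_smul hi
  rw [map_sum]
  refine Finset.sum_pos' (fun j _ => ?_) ⟨i, Finset.mem_univ i, ?_⟩
  · rw [map_smul, smul_eq_mul]
    exact mul_nonneg (Nat.cast_nonneg _) (hS _ (hv j)).le
  · rw [map_smul, smul_eq_mul]
    exact mul_pos ((Nat.cast_nonneg _).lt_of_ne' hki) (hS _ (hv i))

lemma add_notMem_coneZ_of_separating {E P N : Set V} (hE : ∀ v ∈ E, f v = 0)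
    (hP : ∀ v ∈ P, 0 < f v) (hN : ∀ v ∈ N, f v ≤ 0) {a x : V} (ha : a ∈ coneR E)
    (hx : x ∈ coneZ P) (hx0 : x ≠ 0) : a + x ∉ coneZ N := fun hax => by
  have := map_nonpos_of_mem_coneZ f hax hN
  rw [map_add, map_eq_zero_of_mem_coneR f ha hE, zero_add] at this
  exact this.not_gt (map_pos_of_mem_coneZ f hx hx0 hP)

end Cones

namespace Complex

lemma arg_pos_of_im_pos {z : ℂ} (hz : 0 < z.im) : 0 < z.arg :=
  (arg_nonneg_iff.2 hz.le).lt_of_ne fun h => hz.ne' (arg_eq_zero_iff.1 h.symm).2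

lemma im_conj_mul_eq_norm_mul_sin_arg_sub {z w : ℂ} (hz : z ≠ 0) (hw : w ≠ 0) :
    (conj z * w).im = ‖z‖ * ‖w‖ * Real.sin (w.arg - z.arg) := by
  rw [Real.sin_sub, sin_arg, sin_arg, cos_arg hz, cos_arg hw, mul_im, conj_re, conj_im]
  field_simp
  ring

lemma im_conj_mul_pos_iff {z w : ℂ} (hz : 0 < z.im) (hw : 0 < w.im) :
    0 < (conj z * w).im ↔ z.arg < w.arg := by
  have hz0 : z ≠ 0 := fun h => by simp [h] at hz
  have hw0 : w ≠ 0 := fun h => by simp [h] at hw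
  have hzπ := arg_lt_pi_iff.2 (Or.inr hz.ne')
  have hwπ := arg_lt_pi_iff.2 (Or.inr hw.ne')
  have hz_pos := arg_pos_of_im_pos hz
  have hw_pos := arg_pos_of_im_pos hw
  rw [im_conj_mul_eq_norm_mul_sin_arg_sub hz0 hw0,
    mul_pos_iff_of_pos_left (by positivity)]
  constructor
  · intro hsin
    by_contra! hle
    exact hsin.not_ge (Real.sin_nonpos_of_nonpos_of_neg_pi_le (by linarith) (by linarith))
  · intro hlt
    exact Real.sin_pos_of_pos_of_lt_pi (by linarith) (by linarith)

lemma im_conj_mul_eq_zero_of_arg_eq {z w : ℂ} (h : z.arg = w.arg) : (conj z * w).im = 0 := by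
  rcases eq_or_ne z 0 with rfl | hz
  · simp
  rcases eq_or_ne w 0 with rfl | hw
  · simp
  rw [im_conj_mul_eq_norm_mul_sin_arg_sub hz hw, h, sub_self, Real.sin_zero, mul_zero]

lemma im_conj_mul_neg_iff {z w : ℂ} (hz : 0 < z.im) (hw : 0 < w.im) :
    (conj z * w).im < 0 ↔ w.arg < z.arg := by
  rw [← im_conj_mul_pos_iff hw hz, ← neg_pos, ← conj_im, map_mul, conj_conj, mul_comm]

lemma im_conj_mul_nonpos_iff {z w : ℂ} (hz : 0 < z.im) (hw : 0 < w.im) :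
    (conj z * w).im ≤ 0 ↔ w.arg ≤ z.arg := by
  rw [← not_lt, im_conj_mul_pos_iff hz hw, not_lt]

lemma im_conj_mul_nonneg_iff {z w : ℂ} (hz : 0 < z.im) (hw : 0 < w.im) :
    0 ≤ (conj z * w).im ↔ z.arg ≤ w.arg := by
  rw [← not_lt, im_conj_mul_neg_iff hz hw, not_lt]

end Complex

theorem stmt2_general (Γ : Set V)
    (c : V →ₗ[ℝ] ℂ) (hc : ∀ γ ∈ Γ, 0 < (c γ).im) :
    IsConvexPreorder Γ (fun a b => (c a).arg ≤ (c b).arg) := by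
  refine ⟨⟨fun _ _ => le_rfl, fun _ _ _ _ _ _ => le_trans, fun _ _ _ _ => le_total _ _⟩,
    fun α hα => ⟨fun a ha x hx hx0 => ?_, fun a ha x hx hx0 => ?_⟩⟩
  all_goals
    let f : V →ₗ[ℝ] ℝ := Complex.imLm ∘ₗ LinearMap.mulLeft ℝ (conj (c α)) ∘ₗ c
    have hf_eq : ∀ v ∈ eqCls Γ (fun a b => (c a).arg ≤ (c b).arg) α, f v = 0 := fun v hv =>
      Complex.im_conj_mul_eq_zero_of_arg_eq (hv.2.1.antisymm hv.2.2)
  · refine add_notMem_coneZ_of_separating f hf_eq ?_ ?_ ha hx hx0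
    · rintro v ⟨hv, -, hlt⟩
      exact (Complex.im_conj_mul_pos_iff (hc α hα) (hc v hv)).2 (not_le.1 hlt)
    · rintro v ⟨hv, hle⟩
      exact (Complex.im_conj_mul_nonpos_iff (hc α hα) (hc v hv)).2 hle
  · refine add_notMem_coneZ_of_separating (-f) (fun v hv => neg_eq_zero.2 (hf_eq v hv)) ?_ ?_
      ha hx hx0
    · rintro v ⟨hv, -, hlt⟩
      exact neg_pos.2 ((Complex.im_conj_mul_neg_iff (hc α hα) (hc v hv)).2 (not_le.1 hlt))
    · rintro v ⟨hv, hle⟩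
      exact neg_nonpos.2 ((Complex.im_conj_mul_nonneg_iff (hc α hα) (hc v hv)).2 hle)

/-- The preorder on `Γ` induced by a charge (comparing arguments of the complex values)
is a convex preorder. -/
theorem stmt2 [FiniteDimensional ℝ V] (Γ : Set V) (h0 : (0 : V) ∉ Γ)
    (c : V →ₗ[ℝ] ℂ) (hc : ∀ γ ∈ Γ, 0 < (c γ).im) :
    IsConvexPreorder Γ (fun a b => (c a).arg ≤ (c b).arg) :=
  stmt2_general Γ c hc
end

section
/- Let K be a countable subfield of ℝ, let n ≥ 1, let a₀ ∈ ℂ with Im(a₀) ≠ 0, and let a₁, …, a_n ∈ ℝ be such that the real numbers Re(a₀), Im(a₀), a₁, …, a_n are linearly independent over K. For a vector v = (v₀, v₁, …, v_n) ∈ K^{n+1} set c(v) = v₀a₀ + v₁a₁ + ⋯ + v_na_n ∈ ℂ. If v, v' ∈ K^{n+1} satisfy v'₀ ≠ 0 and c(v) = p·c(v') for some p ∈ ℝ, then p ∈ K and v = p·v'; in particular v and v' are parallel. -/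
/-! Comparing imaginary parts (where only `a₀` contributes, and `Im a₀ ≠ 0`) gives
`v₀ = p v'₀`, so `p = v₀ / v'₀ ∈ K`. Comparing real parts then gives a `K`-linear relation
`∑ (vᵢ - p v'ᵢ) aᵢ = 0`, whose coefficients vanish by linear independence. -/

theorem Complex.eq_mul_and_eq_mul_of_ofReal_mul_add_ofReal {a₀ : ℂ} (ha₀ : a₀.im ≠ 0)
    {x y s t p : ℝ} (h : (x : ℂ) * a₀ + s = p * ((y : ℂ) * a₀ + t)) :
    x = p * y ∧ s = p * t := by
  have him := congrArg Complex.im h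
  have hre := congrArg Complex.re h
  simp only [Complex.add_im, Complex.add_re, Complex.mul_im, Complex.mul_re, Complex.ofReal_re,
    Complex.ofReal_im] at him hre
  have hx : x = p * y := mul_right_cancel₀ ha₀ (by linarith)
  refine ⟨hx, ?_⟩
  subst hx
  linarith

theorem stmt4_general (K : Subfield ℝ)
    (n : ℕ) (a₀ : ℂ) (ha₀ : a₀.im ≠ 0) (a : Fin n → ℝ)
    (hLI : ∀ (q₀ q₁ : ℝ) (q : Fin n → ℝ), q₀ ∈ K → q₁ ∈ K → (∀ i, q i ∈ K) →
      q₀ * a₀.re + q₁ * a₀.im + ∑ i, q i * a i = 0 →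
      q₀ = 0 ∧ q₁ = 0 ∧ ∀ i, q i = 0)
    (v v' : Fin (n + 1) → ℝ) (hv : ∀ i, v i ∈ K) (hv' : ∀ i, v' i ∈ K)
    (hv'0 : v' 0 ≠ 0) (p : ℝ)
    (hc : (v 0 : ℂ) * a₀ + ((∑ i : Fin n, v i.succ * a i : ℝ) : ℂ)
        = (p : ℂ) * ((v' 0 : ℂ) * a₀ + ((∑ i : Fin n, v' i.succ * a i : ℝ) : ℂ))) :
    p ∈ K ∧ v = p • v' := by
  obtain ⟨h0, hsum⟩ := Complex.eq_mul_and_eq_mul_of_ofReal_mul_add_ofReal ha₀ hc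
  have hpK : p ∈ K := by
    rw [eq_div_of_mul_eq hv'0 h0.symm]
    exact K.div_mem (hv 0) (hv' 0)
  have hrel : (0 : ℝ) * a₀.re + 0 * a₀.im + ∑ i, (v i.succ - p * v' i.succ) * a i = 0 := by
    simp only [zero_mul, add_zero, sub_mul, Finset.sum_sub_distrib, mul_assoc, ← Finset.mul_sum,
      hsum, sub_self]
  obtain ⟨-, -, hcoef⟩ := hLI 0 0 _ K.zero_mem K.zero_mem
    (fun i => K.sub_mem (hv i.succ) (K.mul_mem hpK (hv' i.succ))) hrel
  exact ⟨hpK, funext <| Fin.forall_fin_succ.2 ⟨h0, fun j => sub_eq_zero.1 (hcoef j)⟩⟩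

/-- Key claim in the proof of Lemma 1.9: if the listed real numbers are linearly independent
over a countable subfield `K` of `ℝ`, then two coefficient vectors over `K` whose charge values
have proportional complex values (with real ratio `p`) are themselves proportional with `p ∈ K`. -/
theorem stmt4 (K : Subfield ℝ) (hK : (K : Set ℝ).Countable)
    (n : ℕ) (hn : 1 ≤ n) (a₀ : ℂ) (ha₀ : a₀.im ≠ 0) (a : Fin n → ℝ)
    (hLI : ∀ (q₀ q₁ : ℝ) (q : Fin n → ℝ), q₀ ∈ K → q₁ ∈ K → (∀ i, q i ∈ K) →
      q₀ * a₀.re + q₁ * a₀.im + ∑ i, q i * a i = 0 →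
      q₀ = 0 ∧ q₁ = 0 ∧ ∀ i, q i = 0)
    (v v' : Fin (n + 1) → ℝ) (hv : ∀ i, v i ∈ K) (hv' : ∀ i, v' i ∈ K)
    (hv'0 : v' 0 ≠ 0) (p : ℝ)
    (hc : (v 0 : ℂ) * a₀ + ((∑ i : Fin n, v i.succ * a i : ℝ) : ℂ)
        = (p : ℂ) * ((v' 0 : ℂ) * a₀ + ((∑ i : Fin n, v' i.succ * a i : ℝ) : ℂ))) :
    p ∈ K ∧ v = p • v' :=
  stmt4_general K n a₀ ha₀ a hLI v v' hv hv' hv'0 p hc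
end

section
/- Let V be a finite-dimensional real vector space and Γ ⊆ V a countable set of vectors, no two distinct elements of which are parallel, contained in an open half-space {v ∈ V : ℓ(v) > 0} for some linear functional ℓ. Let ⪯ be a convex total preorder on Γ, and for each equivalence class 𝒟 of ⪯ let ≤_𝒟 be a convex total order on 𝒟 (viewing 𝒟 as a set of vectors in V). Then the refinement ⪯' of ⪯, defined by α ⪯' β iff either α ≺ β, or α ∼ β and α ≤_𝒟 β where 𝒟 is their common equivalence class, is a convex total order on Γ. In particular, every convex total preorder on Γ can be refined to a convex total order. -/
open scoped BigOperators

variable {V : Type*} [AddCommGroup V] [Module ℝ V]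

/-! ### Auxiliary lemmas on `coneZ` and `coneR` -/

theorem coneZ_add' {S : Set V} {x y : V} (hx : x ∈ coneZ S) (hy : y ∈ coneZ S) :
    x + y ∈ coneZ S := by
  obtain ⟨n, c, v, hv, rfl⟩ := hx
  obtain ⟨m, d, w, hw, rfl⟩ := hy
  refine ⟨n + m, Fin.append c d, Fin.append v w, fun i => ?_, ?_⟩
  · induction i using Fin.addCases with
    | left i => rw [Fin.append_left]; exact hv i
    | right i => rw [Fin.append_right]; exact hw i
  · rw [Fin.sum_univ_add]
    simp [Fin.append_left, Fin.append_right]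

theorem coneR_add' {S : Set V} {x y : V} (hx : x ∈ coneR S) (hy : y ∈ coneR S) :
    x + y ∈ coneR S := by
  obtain ⟨n, c, v, hc, hv, rfl⟩ := hx
  obtain ⟨m, d, w, hd, hw, rfl⟩ := hy
  refine ⟨n + m, Fin.append c d, Fin.append v w, fun i => ?_, fun i => ?_, ?_⟩
  · induction i using Fin.addCases with
    | left i => rw [Fin.append_left]; exact hc i
    | right i => rw [Fin.append_right]; exact hd i
  · induction i using Fin.addCases with
    | left i => rw [Fin.append_left]; exact hv i
    | right i => rw [Fin.append_right]; exact hw i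
  · rw [Fin.sum_univ_add]
    simp [Fin.append_left, Fin.append_right]

theorem coneZ_zero_mem (S : Set V) : (0 : V) ∈ coneZ S :=
  ⟨0, fun i => i.elim0, fun i => i.elim0, fun i => i.elim0, by simp⟩

theorem coneZ_nsmul_mem {S : Set V} {v : V} (hv : v ∈ S) (n : ℕ) :
    (n : ℝ) • v ∈ coneZ S :=
  ⟨1, fun _ => n, fun _ => v, fun _ => hv, by simp⟩

theorem coneZ_mono {S T : Set V} (h : S ⊆ T) : coneZ S ⊆ coneZ T := by
  rintro x ⟨n, c, v, hv, rfl⟩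
  exact ⟨n, c, v, fun i => h (hv i), rfl⟩

theorem coneR_mono {S T : Set V} (h : S ⊆ T) : coneR S ⊆ coneR T := by
  rintro x ⟨n, c, v, hc, hv, rfl⟩
  exact ⟨n, c, v, hc, fun i => h (hv i), rfl⟩

theorem coneZ_subset_coneR (S : Set V) : coneZ S ⊆ coneR S := by
  rintro x ⟨n, c, v, hv, rfl⟩
  exact ⟨n, fun i => (c i : ℝ), v, fun i => Nat.cast_nonneg _, hv, rfl⟩

theorem coneR_smul_mem {S : Set V} {v : V} (hv : v ∈ S) {t : ℝ} (ht : 0 ≤ t) :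
    t • v ∈ coneR S :=
  ⟨1, fun _ => t, fun _ => v, fun _ => ht, fun _ => hv, by simp⟩

theorem coneR_singleton {v : V} {x : V} (hx : x ∈ coneR ({v} : Set V)) :
    ∃ t : ℝ, 0 ≤ t ∧ x = t • v := by
  obtain ⟨n, c, w, hc, hw, rfl⟩ := hx
  refine ⟨∑ i, c i, Finset.sum_nonneg fun i _ => hc i, ?_⟩
  rw [Finset.sum_smul]
  exact Finset.sum_congr rfl fun i _ => by rw [hw i]

theorem coneZ_eq_closure (S : Set V) : coneZ S = (AddSubmonoid.closure S : Set V) := by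
  ext x
  constructor
  · rintro ⟨n, c, v, hv, rfl⟩
    refine AddSubmonoid.sum_mem _ fun i _ => ?_
    rw [Nat.cast_smul_eq_nsmul]
    exact nsmul_mem (AddSubmonoid.subset_closure (hv i)) (c i)
  · intro hx
    have : AddSubmonoid.closure S ≤
        { carrier := coneZ S
          zero_mem' := coneZ_zero_mem S
          add_mem' := fun h1 h2 => coneZ_add' h1 h2 } :=
      AddSubmonoid.closure_le.mpr fun v hv => by
        have := coneZ_nsmul_mem hv 1
        simpa using this
    exact this hx

theorem coneZ_union_split {A B : Set V} {x : V} (hx : x ∈ coneZ (A ∪ B)) :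
    ∃ y ∈ coneZ A, ∃ z ∈ coneZ B, x = y + z := by
  rw [coneZ_eq_closure, AddSubmonoid.closure_union] at hx
  rw [SetLike.mem_coe, AddSubmonoid.mem_sup] at hx
  obtain ⟨y, hy, z, hz, h⟩ := hx
  refine ⟨y, ?_, z, ?_, h.symm⟩
  · rw [coneZ_eq_closure]; exact hy
  · rw [coneZ_eq_closure]; exact hz

/-- swapping a relation preserves the class. -/
theorem eqCls_swap (Γ : Set V) (le : V → V → Prop) (α : V) :
    eqCls Γ (fun a b => le b a) α = eqCls Γ le α := by
  ext β
  exact ⟨fun ⟨h1, h2, h3⟩ => ⟨h1, h3, h2⟩, fun ⟨h1, h2, h3⟩ => ⟨h1, h3, h2⟩⟩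

theorem IsConvexPreorder.swap {Γ : Set V} {le : V → V → Prop}
    (h : IsConvexPreorder Γ le) : IsConvexPreorder Γ (fun a b => le b a) := by
  obtain ⟨⟨hr, ht, hto⟩, hc⟩ := h
  refine ⟨⟨hr, fun a ha b hb c hc' hab hbc => ht c hc' b hb a ha hbc hab,
    fun a ha b hb => (hto b hb a ha)⟩, fun α hα => ?_⟩
  obtain ⟨h1, h2⟩ := hc α hα
  constructor
  · intro a ha x hx hxne
    exact h2 a (by rw [eqCls_swap] at ha; exact ha) x hx hxne
  · intro a ha x hx hxne
    exact h1 a (by rw [eqCls_swap] at ha; exact ha) x hx hxne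

theorem IsConvexOrder.swap {Γ : Set V} {le : V → V → Prop}
    (h : IsConvexOrder Γ le) : IsConvexOrder Γ (fun a b => le b a) :=
  ⟨h.1.swap, fun a ha b hb h1 h2 => h.2 a ha b hb h2 h1⟩

/-- Key lemma: one half of the convexity of the refined order. -/
theorem main_aux (Γ : Set V) (le le2 le' : V → V → Prop)
    (hconv : IsConvexPreorder Γ le)
    (hle2 : ∀ α ∈ Γ, IsConvexOrder (eqCls Γ le α) le2)
    (hle' : ∀ a b, le' a b ↔ (sLT le a b ∨ (le a b ∧ le b a ∧ le2 a b)))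
    (α : V) (hα : α ∈ Γ) :
    ∀ a ∈ coneR (eqCls Γ le' α), ∀ x ∈ coneZ {β | β ∈ Γ ∧ sLT le' α β}, x ≠ 0 →
      a + x ∉ coneZ {β | β ∈ Γ ∧ le' β α} := by
  intro a ha x hx hxne hmem
  have hrefl := hconv.1.refl α hα
  have hαD : α ∈ eqCls Γ le α := ⟨hα, hrefl, hrefl⟩
  have hle2α := hle2 α hα
  have hle2refl : le2 α α := hle2α.1.1.refl α hαD
  -- the `le'`-class of `α` is just `{α}`
  have hcls : eqCls Γ le' α ⊆ ({α} : Set V) := by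
    rintro β ⟨hβΓ, h1, h2⟩
    rw [hle'] at h1 h2
    simp only [Set.mem_singleton_iff]
    rcases h1 with h1 | ⟨h1a, h1b, h1c⟩
    · rcases h2 with h2 | ⟨h2a, h2b, h2c⟩
      · exact absurd h2.1 h1.2
      · exact absurd h2a h1.2
    · rcases h2 with h2 | ⟨h2a, h2b, h2c⟩
      · exact absurd h1a h2.2
      · exact (hle2α.2 α hαD β ⟨hβΓ, h1a, h1b⟩ h1c h2c).symm
  obtain ⟨t, ht0, rfl⟩ := coneR_singleton (coneR_mono hcls ha)
  -- decompose x
  have hxsub : {β | β ∈ Γ ∧ sLT le' α β} ⊆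
      {β | β ∈ Γ ∧ sLT le α β} ∪ {β | β ∈ eqCls Γ le α ∧ sLT le2 α β} := by
    rintro β ⟨hβΓ, h1, h2⟩
    rw [hle'] at h1
    rcases h1 with h1 | ⟨ha', hb', hc'⟩
    · exact Or.inl ⟨hβΓ, h1⟩
    · refine Or.inr ⟨⟨hβΓ, ha', hb'⟩, hc', fun hba => h2 ?_⟩
      rw [hle']
      exact Or.inr ⟨hb', ha', hba⟩
  obtain ⟨x₁, hx₁, x₂, hx₂, rfl⟩ := coneZ_union_split (coneZ_mono hxsub hx)
  -- decompose the putative sum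
  have hysub : {β | β ∈ Γ ∧ le' β α} ⊆
      {β | β ∈ Γ ∧ sLT le β α} ∪ {β | β ∈ eqCls Γ le α ∧ le2 β α} := by
    rintro β ⟨hβΓ, h1⟩
    rw [hle'] at h1
    rcases h1 with h1 | ⟨ha', hb', hc'⟩
    · exact Or.inl ⟨hβΓ, h1⟩
    · exact Or.inr ⟨⟨hβΓ, hb', ha'⟩, hc'⟩
  obtain ⟨y₁, hy₁, y₂, hy₂, hxy⟩ := coneZ_union_split (coneZ_mono hysub hmem)
  have hBD : {β | β ∈ eqCls Γ le α ∧ sLT le2 α β} ⊆ eqCls Γ le α := fun β hβ => hβ.1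
  have hB'D : {β | β ∈ eqCls Γ le α ∧ le2 β α} ⊆ eqCls Γ le α := fun β hβ => hβ.1
  have hDle : eqCls Γ le α ⊆ {β | β ∈ Γ ∧ le β α} := fun β hβ => ⟨hβ.1, hβ.2.2⟩
  have hDge : eqCls Γ le α ⊆ {β | β ∈ Γ ∧ le α β} := fun β hβ => ⟨hβ.1, hβ.2.1⟩
  by_cases hx₁0 : x₁ = 0
  · have hx₂0 : x₂ ≠ 0 := by simpa [hx₁0] using hxne
    rw [hx₁0, zero_add] at hxy
    by_cases hy₁0 : y₁ = 0
    · rw [hy₁0, zero_add] at hxy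
      -- use le2-convexity (i)
      have hαD2 : α ∈ eqCls (eqCls Γ le α) le2 α := ⟨hαD, hle2refl, hle2refl⟩
      refine (hle2α.1.2 α hαD).1 (t • α) (coneR_smul_mem hαD2 ht0) x₂ hx₂ hx₂0 ?_
      rw [hxy]
      exact hy₂
    · -- use le-convexity (ii) with ceiling padding
      have hnt : t ≤ (⌈t⌉₊ : ℝ) := Nat.le_ceil t
      refine (hconv.2 α hα).2 (y₂ + ((⌈t⌉₊ : ℝ) - t) • α)
        (coneR_add' (coneZ_subset_coneR _ (coneZ_mono hB'D hy₂))
          (coneR_smul_mem hαD (sub_nonneg.2 hnt))) y₁ hy₁ hy₁0 ?_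
      have heq : y₂ + ((⌈t⌉₊ : ℝ) - t) • α + y₁ = (⌈t⌉₊ : ℝ) • α + x₂ := by
        rw [sub_smul, show y₂ + ((⌈t⌉₊ : ℝ) • α - t • α) + y₁
          = (y₁ + y₂) + ((⌈t⌉₊ : ℝ) • α - t • α) by abel, ← hxy]
        abel
      rw [heq]
      refine coneZ_add'
        (coneZ_nsmul_mem (show α ∈ {β | β ∈ Γ ∧ le α β} from ⟨hα, hrefl⟩) _)
        (coneZ_mono (show {β | β ∈ eqCls Γ le α ∧ sLT le2 α β} ⊆ {β | β ∈ Γ ∧ le α β}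
          from fun β hβ => ⟨hβ.1.1, hβ.1.2.1⟩) hx₂)
  · -- use le-convexity (i)
    refine (hconv.2 α hα).1 (t • α + x₂)
      (coneR_add' (coneR_smul_mem hαD ht0)
        (coneZ_subset_coneR _ (coneZ_mono hBD hx₂))) x₁ hx₁ hx₁0 ?_
    have heq : t • α + x₂ + x₁ = y₁ + y₂ := by rw [← hxy]; abel
    rw [heq]
    exact coneZ_add'
      (coneZ_mono (show {β | β ∈ Γ ∧ sLT le β α} ⊆ {β | β ∈ Γ ∧ le β α}
        from fun β hβ => ⟨hβ.1, hβ.2.1⟩) hy₁)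
      (coneZ_mono (show {β | β ∈ eqCls Γ le α ∧ le2 β α} ⊆ {β | β ∈ Γ ∧ le β α}
        from fun β hβ => hDle hβ.1) hy₂)

/-- Lemma 1.10: refining a convex total preorder by a choice of convex total order on each
equivalence class yields a convex total order. -/
theorem stmt5 [FiniteDimensional ℝ V] (Γ : Set V) (hΓ : Γ.Countable)
    (hpar : ∀ γ ∈ Γ, ∀ γ' ∈ Γ, ∀ t : ℝ, γ = t • γ' → γ = γ')
    (ℓ : V →ₗ[ℝ] ℝ) (hl : ∀ γ ∈ Γ, 0 < ℓ γ)
    (le : V → V → Prop) (hconv : IsConvexPreorder Γ le)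
    (le2 : V → V → Prop)
    (hle2 : ∀ α ∈ Γ, IsConvexOrder (eqCls Γ le α) le2) :
    IsConvexOrder Γ (fun a b => sLT le a b ∨ (le a b ∧ le b a ∧ le2 a b)) := by
  have htp := hconv.1
  have hswap2 : ∀ α ∈ Γ, IsConvexOrder (eqCls Γ (fun a b => le b a) α) (fun a b => le2 b a) := by
    intro α hα
    rw [eqCls_swap]
    exact (hle2 α hα).swap
  refine ⟨⟨⟨?_, ?_, ?_⟩, fun α hα => ⟨?_, ?_⟩⟩, ?_⟩
  · -- refl
    intro a ha
    exact Or.inr ⟨htp.refl a ha, htp.refl a ha,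
      (hle2 a ha).1.1.refl a ⟨ha, htp.refl a ha, htp.refl a ha⟩⟩
  · -- trans
    intro a ha b hb c hc hab hbc
    rcases hab with hab | ⟨h1, h2, h3⟩
    · rcases hbc with hbc | ⟨k1, k2, k3⟩
      · exact Or.inl ⟨htp.trans a ha b hb c hc hab.1 hbc.1,
          fun hca => hab.2 (htp.trans b hb c hc a ha hbc.1 hca)⟩
      · exact Or.inl ⟨htp.trans a ha b hb c hc hab.1 k1,
          fun hca => hab.2 (htp.trans b hb c hc a ha k1 hca)⟩
    · rcases hbc with hbc | ⟨k1, k2, k3⟩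
      · exact Or.inl ⟨htp.trans a ha b hb c hc h1 hbc.1,
          fun hca => hbc.2 (htp.trans c hc a ha b hb hca h1)⟩
      · have hac : le a c := htp.trans a ha b hb c hc h1 k1
        have hca : le c a := htp.trans c hc b hb a ha k2 h2
        refine Or.inr ⟨hac, hca, ?_⟩
        exact (hle2 a ha).1.1.trans a ⟨ha, htp.refl a ha, htp.refl a ha⟩
          b ⟨hb, h1, h2⟩ c ⟨hc, hac, hca⟩ h3 k3
  · -- total
    intro a ha b hb
    by_cases hab : le a b
    · by_cases hba : le b a
      · rcases (hle2 a ha).1.1.total a ⟨ha, htp.refl a ha, htp.refl a ha⟩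
          b ⟨hb, hab, hba⟩ with h | h
        · exact Or.inl (Or.inr ⟨hab, hba, h⟩)
        · exact Or.inr (Or.inr ⟨hba, hab, h⟩)
      · exact Or.inl (Or.inl ⟨hab, hba⟩)
    · rcases htp.total a ha b hb with h | h
      · exact absurd h hab
      · exact Or.inr (Or.inl ⟨h, hab⟩)
  · -- convexity (i)
    exact main_aux Γ le le2 _ hconv hle2 (fun a b => Iff.rfl) α hα
  · -- convexity (ii), via swapping
    intro a ha x hx hne
    have h := main_aux Γ (fun a b => le b a) (fun a b => le2 b a)
      (fun a b => sLT le b a ∨ (le b a ∧ le a b ∧ le2 b a))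
      hconv.swap hswap2 (fun a b => Iff.rfl) α hα
    have hset : eqCls Γ (fun a b => sLT le b a ∨ (le b a ∧ le a b ∧ le2 b a)) α
        = eqCls Γ (fun a b => sLT le a b ∨ (le a b ∧ le b a ∧ le2 a b)) α := by
      ext β
      exact ⟨fun ⟨h1, h2, h3⟩ => ⟨h1, h3, h2⟩, fun ⟨h1, h2, h3⟩ => ⟨h1, h3, h2⟩⟩
    exact h a (by rw [hset]; exact ha) x hx hne
  · -- antisymmetry
    intro a ha b hb h1 h2
    rcases h1 with h1 | ⟨h1a, h1b, h1c⟩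
    · rcases h2 with h2 | ⟨h2a, h2b, h2c⟩
      · exact absurd h2.1 h1.2
      · exact absurd h2a h1.2
    · rcases h2 with h2 | ⟨h2a, h2b, h2c⟩
      · exact absurd h1a h2.2
      · exact (hle2 a ha).2 a ⟨ha, htp.refl a ha, htp.refl a ha⟩ b ⟨hb, h1a, h1b⟩ h1c h2c
end
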